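/- Every finite simple graph G of class 1 (χ'(G) = Δ(G)) is an induced-degree-preserving subgraph of some Δ(G)-regular 1-factorizable finite simple graph H with Δ(H) = Δ(G); that is, G embeds as a subgraph of a Δ(G)-regular graph whose edge set decomposes into Δ(G) perfect matchings. -/

import Mathlib

open MvPolynomial

/-- An arbitrary linear labeling of a finite vertex type. -/
noncomputable def someLinearOrder (V : Type*) [Fintype V] : LinearOrder V :=
  LinearOrder.lift' (Fintype.equivFin V) (Fintype.equivFin V).injective

/-- The graph polynomial `∏_{ij ∈ E, i<j} (x_i − x_j)` with respect to a given
linear labeling of the vertices. -/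
noncomputable def graphPolyAux {V : Type*} [Fintype V] (lo : LinearOrder V)
    (G : SimpleGraph V) : MvPolynomial V ℤ :=
  letI := lo
  letI := Classical.decRel G.Adj
  ∏ p ∈ Finset.univ.filter (fun p : V × V => G.Adj p.1 p.2 ∧ p.1 < p.2), (X p.1 - X p.2)

/-- The graph polynomial of `G` (its monomial support does not depend on the labeling). -/
noncomputable def graphPoly {V : Type*} [Fintype V] (G : SimpleGraph V) : MvPolynomial V ℤ :=
  graphPolyAux (someLinearOrder V) G

/-- The Alon–Tarsi number of `G`: one plus the minimum, over monomials with nonzero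
coefficient in the graph polynomial, of the maximum exponent of a variable. -/
noncomputable def alonTarsiNumber {V : Type*} [Fintype V] (G : SimpleGraph V) : ℕ :=
  1 + sInf {d : ℕ | ∃ m ∈ (graphPoly G).support, d = Finset.univ.sup fun v => m v}

/-- `G` is colorable from any assignment of lists of size `t`. -/
def Choosable {V : Type*} (G : SimpleGraph V) (t : ℕ) : Prop :=
  ∀ L : V → Finset ℕ, (∀ v, (L v).card = t) →
    ∃ c : V → ℕ, (∀ v, c v ∈ L v) ∧ ∀ ⦃v w⦄, G.Adj v w → c v ≠ c w

/-- The choice number (list chromatic number) of `G`. -/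
noncomputable def choiceNumber {V : Type*} (G : SimpleGraph V) : ℕ :=
  sInf {t : ℕ | Choosable G t}

/-- `M` is a 1-factorization of `G` into `Δ` perfect matchings. -/
def IsOneFactorization {V : Type*} (G : SimpleGraph V) {Δ : ℕ}
    (M : Fin Δ → G.Subgraph) : Prop :=
  (∀ i, (M i).IsPerfectMatching) ∧
  (∀ i j, i ≠ j → Disjoint (M i).edgeSet (M j).edgeSet) ∧
  (⋃ i, (M i).edgeSet) = G.edgeSet

/-- `G` is 1-factorizable into `Δ` perfect matchings. -/
def OneFactorizable {V : Type*} (G : SimpleGraph V) (Δ : ℕ) : Prop :=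
  ∃ M : Fin Δ → G.Subgraph, IsOneFactorization G M

/-- The total graph of `G`, on vertex set `V(G) ⊕ E(G)`. -/
def totalGraph {V : Type*} (G : SimpleGraph V) : SimpleGraph (V ⊕ G.edgeSet) where
  Adj x y := match x, y with
    | .inl v, .inl w => G.Adj v w
    | .inl v, .inr e => v ∈ (e : Sym2 V)
    | .inr e, .inl v => v ∈ (e : Sym2 V)
    | .inr e, .inr f => e ≠ f ∧ ∃ v, v ∈ (e : Sym2 V) ∧ v ∈ (f : Sym2 V)
  symm := ⟨by
    rintro (v | e) (w | f) h
    · exact h.symm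
    · exact h
    · exact h
    · exact ⟨h.1.symm, h.2.imp fun v hv => ⟨hv.2, hv.1⟩⟩⟩
  loopless := ⟨by
    rintro (v | e) h
    · exact G.loopless.irrefl v h
    · exact h.1 rfl⟩

/-- The subdivision graph of `G`, on vertex set `V(G) ⊕ E(G)`. -/
def subdivisionGraph {V : Type*} (G : SimpleGraph V) : SimpleGraph (V ⊕ G.edgeSet) where
  Adj x y := match x, y with
    | .inl v, .inr e => v ∈ (e : Sym2 V)
    | .inr e, .inl v => v ∈ (e : Sym2 V)
    | _, _ => False
  symm := ⟨by rintro (v | e) (w | f) h <;> simp_all⟩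
  loopless := ⟨by rintro (v | e) h <;> simp_all⟩

/-- The square of a graph: adjacency at distance 1 or 2. -/
def squareGraph {W : Type*} (H : SimpleGraph W) : SimpleGraph W where
  Adj u v := u ≠ v ∧ (H.Adj u v ∨ ∃ w, H.Adj u w ∧ H.Adj w v)
  symm := ⟨fun u v ⟨hne, h⟩ =>
    ⟨hne.symm, h.imp (fun a => a.symm) fun ⟨w, h1, h2⟩ => ⟨w, h2.symm, h1.symm⟩⟩⟩
  loopless := ⟨fun u h => h.1 rfl⟩

/-!
Fix a proper edge colouring `c` of `G` with colours `α`. Take one copy of `G` for every subset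
`s ⊆ α`, and join the copy `(v, s)` of a vertex to `(v, s ∆ {i})` whenever the colour `i` is
missing at `v`; give this new edge the colour `i`. Each vertex now sees every colour exactly once
(a colour present at `v` along the copy of its `G`-edge, a missing one along the hypercube edge),
so the colour classes are perfect matchings covering all edges.
-/

theorem OneFactorizable.neighborSet_ncard {W : Type*} {H : SimpleGraph W} {Δ : ℕ}
    (hH : OneFactorizable H Δ) (w : W) : (H.neighborSet w).ncard = Δ := by
  obtain ⟨M, hM, hdisj, hunion⟩ := hH
  choose p hp hpuniq using fun i => (hM i).1 ((hM i).2 w)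
  have hp_inj : Function.Injective p := fun i j hij => by
    by_contra hne
    exact Set.disjoint_left.mp (hdisj i j hne) (SimpleGraph.Subgraph.mem_edgeSet.mpr (hp i))
      (SimpleGraph.Subgraph.mem_edgeSet.mpr (hij ▸ hp j))
  have hrange : H.neighborSet w = Set.range p := by
    ext u
    refine ⟨fun hu => ?_, fun ⟨i, hi⟩ => hi ▸ (M i).adj_sub (hp i)⟩
    have hwu : s(w, u) ∈ ⋃ i, (M i).edgeSet := hunion ▸ H.mem_edgeSet.mpr hu
    obtain ⟨i, hi⟩ := Set.mem_iUnion.mp hwu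
    exact ⟨i, (hpuniq i u hi).symm⟩
  rw [hrange, ← Set.image_univ, Set.ncard_image_of_injective _ hp_inj, Set.ncard_univ,
    Nat.card_fin]

open scoped symmDiff

namespace SimpleGraph

variable {V α : Type*} {G : SimpleGraph V}

theorem Coloring.eq_of_lineGraph_color_eq (c : G.lineGraph.Coloring α) {v w w' : V}
    (h : G.Adj v w) (h' : G.Adj v w') (hc : c ⟨s(v, w), h⟩ = c ⟨s(v, w'), h'⟩) : w = w' := by
  by_contra hne
  refine c.valid (lineGraph_adj_iff_exists.mpr ⟨?_, v, Sym2.mem_mk_left _ _,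
    Sym2.mem_mk_left _ _⟩) hc
  exact fun he => hne (Sym2.congr_right.mp (Subtype.ext_iff.mp he))

def Coloring.MissesAt (c : G.lineGraph.Coloring α) (v : V) (i : α) : Prop :=
  ∀ w (h : G.Adj v w), c ⟨s(v, w), h⟩ ≠ i

variable (c : G.lineGraph.Coloring α)

def cubeExtension : SimpleGraph (V × Set α) where
  Adj p q := (G.Adj p.1 q.1 ∧ p.2 = q.2) ∨
    (p.1 = q.1 ∧ ∃ i, c.MissesAt p.1 i ∧ q.2 = p.2 ∆ {i})
  symm := ⟨by
    rintro ⟨v, s⟩ ⟨w, t⟩ (⟨h, rfl⟩ | ⟨rfl, i, hi, rfl⟩)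
    · exact Or.inl ⟨h.symm, rfl⟩
    · exact Or.inr ⟨rfl, i, hi, (symmDiff_symmDiff_cancel_right ..).symm⟩⟩
  loopless := ⟨by
    rintro ⟨v, s⟩ (⟨h, -⟩ | ⟨-, i, -, hs⟩)
    · exact G.loopless.irrefl v h
    · exact Set.singleton_ne_empty i (symmDiff_eq_left.mp hs.symm)⟩

def cubeColorClass (i : α) : (cubeExtension c).Subgraph where
  verts := Set.univ
  Adj p q := (∃ h : G.Adj p.1 q.1, c ⟨s(p.1, q.1), h⟩ = i ∧ p.2 = q.2) ∨
    (p.1 = q.1 ∧ c.MissesAt p.1 i ∧ q.2 = p.2 ∆ {i})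
  adj_sub := by
    rintro ⟨v, s⟩ ⟨w, t⟩ (⟨h, -, rfl⟩ | ⟨rfl, hi, rfl⟩)
    · exact Or.inl ⟨h, rfl⟩
    · exact Or.inr ⟨rfl, i, hi, rfl⟩
  edge_vert _ := Set.mem_univ _
  symm := ⟨by
    rintro ⟨v, s⟩ ⟨w, t⟩ (⟨h, hc, rfl⟩ | ⟨rfl, hi, rfl⟩)
    · exact Or.inl ⟨h.symm, (congrArg c (Subtype.ext Sym2.eq_swap)).trans hc, rfl⟩
    · exact Or.inr ⟨rfl, hi, (symmDiff_symmDiff_cancel_right ..).symm⟩⟩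

theorem cubeColorClass_isPerfectMatching (i : α) : (cubeColorClass c i).IsPerfectMatching := by
  refine ⟨?_, fun _ => Set.mem_univ _⟩
  rintro ⟨v, s⟩ -
  by_cases hi : c.MissesAt v i
  · refine ⟨(v, s ∆ {i}), Or.inr ⟨rfl, hi, rfl⟩, ?_⟩
    rintro ⟨w, t⟩ (⟨h, hc, -⟩ | ⟨rfl, -, rfl⟩)
    · exact absurd hc (hi w h)
    · rfl
  · obtain ⟨w, h, hc⟩ : ∃ w, ∃ h : G.Adj v w, c ⟨s(v, w), h⟩ = i := by
      simpa [Coloring.MissesAt] using hi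
    refine ⟨(w, s), Or.inl ⟨h, hc, rfl⟩, ?_⟩
    rintro ⟨w', t⟩ (⟨h', hc', rfl⟩ | ⟨rfl, hi', -⟩)
    · obtain rfl := c.eq_of_lineGraph_color_eq h' h (hc'.trans hc.symm)
      rfl
    · exact absurd hc (hi' w h)

theorem cubeColorClass_disjoint {i j : α} (hij : i ≠ j) :
    Disjoint (cubeColorClass c i).edgeSet (cubeColorClass c j).edgeSet := by
  refine Set.disjoint_left.mpr fun e hi hj => ?_
  induction e using Sym2.ind with
  | _ p q =>
    rcases hi with ⟨h, hc, -⟩ | ⟨hpq, -, hs⟩ <;> rcases hj with ⟨h', hc', -⟩ | ⟨hpq', -, hs'⟩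
    · exact hij (hc.symm.trans hc')
    · exact G.loopless.irrefl q.1 (hpq' ▸ h)
    · exact G.loopless.irrefl q.1 (hpq ▸ h')
    · exact hij (Set.singleton_injective (symmDiff_right_injective _ (hs.symm.trans hs')))

theorem iUnion_cubeColorClass_edgeSet :
    ⋃ i, (cubeColorClass c i).edgeSet = (cubeExtension c).edgeSet := by
  ext e
  induction e using Sym2.ind with
  | _ p q =>
    simp only [Set.mem_iUnion, Subgraph.mem_edgeSet, mem_edgeSet]
    refine ⟨fun ⟨i, hi⟩ => (cubeColorClass c i).adj_sub hi, ?_⟩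
    rintro (⟨h, hs⟩ | ⟨hpq, i, hi, hs⟩)
    · exact ⟨_, Or.inl ⟨h, rfl, hs⟩⟩
    · exact ⟨i, Or.inr ⟨hpq, hi, hs⟩⟩

theorem oneFactorizable_cubeExtension {Δ : ℕ} (c : G.lineGraph.Coloring (Fin Δ)) :
    OneFactorizable (cubeExtension c) Δ :=
  ⟨cubeColorClass c, cubeColorClass_isPerfectMatching c,
    fun _ _ => cubeColorClass_disjoint c, iUnion_cubeColorClass_edgeSet c⟩

theorem cubeExtension_adj_of_adj {v w : V} (h : G.Adj v w) :
    (cubeExtension c).Adj (v, ∅) (w, ∅) :=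
  Or.inl ⟨h, rfl⟩

end SimpleGraph

theorem class1_embeds_in_oneFactorizable_general {V : Type*} [Fintype V]
    (G : SimpleGraph V) [DecidableRel G.Adj]
    (hclass1 : G.lineGraph.chromaticNumber = (G.maxDegree : ℕ∞)) :
    ∃ (W : Type) (_ : Finite W) (H : SimpleGraph W),
      (∀ w : W, (H.neighborSet w).ncard = G.maxDegree) ∧
      OneFactorizable H G.maxDegree ∧
      ∃ f : V → W, Function.Injective f ∧ ∀ v w, G.Adj v w → H.Adj (f v) (f w) := by
  obtain ⟨c⟩ : G.lineGraph.Colorable G.maxDegree :=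
    SimpleGraph.chromaticNumber_le_iff_colorable.mp hclass1.le
  -- `W` must live in `Type`, so first relabel the vertices by `Fin (card V)`.
  let e := SimpleGraph.Iso.map (Fintype.equivFin V) G
  let c' := c.comp e.symm.lineGraph.toHom
  have hH := SimpleGraph.oneFactorizable_cubeExtension c'
  refine ⟨_, inferInstance, SimpleGraph.cubeExtension c', hH.neighborSet_ncard, hH,
    fun v => (e v, ∅), fun v w hvw => e.injective (congrArg Prod.fst hvw),
    fun v w h => SimpleGraph.cubeExtension_adj_of_adj c' (e.map_adj_iff.mpr h)⟩

/-- Every class 1 graph `G` embeds as a subgraph of a `Δ(G)`-regular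
1-factorizable finite graph (whose maximum degree is therefore `Δ(G)`). -/
theorem class1_embeds_in_oneFactorizable {V : Type*} [Fintype V] [DecidableEq V]
    (G : SimpleGraph V) [DecidableRel G.Adj]
    (hclass1 : G.lineGraph.chromaticNumber = (G.maxDegree : ℕ∞)) :
    ∃ (W : Type) (_ : Finite W) (H : SimpleGraph W),
      (∀ w : W, (H.neighborSet w).ncard = G.maxDegree) ∧
      OneFactorizable H G.maxDegree ∧
      ∃ f : V → W, Function.Injective f ∧ ∀ v w, G.Adj v w → H.Adj (f v) (f w) :=
  class1_embeds_in_oneFactorizable_general G hclass1
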